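/- arXiv:1903.09352 — 2 statements merged into one kernel-verified Lean document; each statement's English description precedes it below -/
import Mathlib

section
/- Let N be a positive integer and δ ∈ (0,1] be such that N ≥ 3^(⌊2/δ⌋² + ⌊2/δ⌋). Suppose A ⊆ [N] satisfies |A| ≥ δN. Then R_2(A − A) ≥ N^(δ/2) / 3^(2/δ). -/
/-!
If `A - A` meets every interval `[v - M, v + M]` with `M ≤ v ≤ L / 4`, a greedy walk through these
intervals produces a `2`-regular subset of `A - A` of size about `L / (16 M)`. Otherwise, for a set
`S ⊆ A` inside an interval of length `L`, the set `S - [0, M)` is disjoint from its translate by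
`v`, hence has at most about `5L / 8` elements, and averaging finds a window of length `M ≈ L / ρ`
in which `S` is `3/2` times denser. Iterating this `⌊2/δ⌋ - 1` times, with `ρ` proportional to
`R_2(A - A)`, either pushes the density of `A` above `1` or bounds `|A|` by `ρ ^ (⌊2/δ⌋ - 1)`,
which forces `R_2(A - A) ≥ N ^ (δ/2) / 3 ^ (2/δ)`.
-/

open scoped Classical Pointwise

/-- `a` and `b` are consecutive elements of the finite set `A` of integers. -/
def ConsecIn (A : Finset ℤ) (a b : ℤ) : Prop :=
  a ∈ A ∧ b ∈ A ∧ a < b ∧ ∀ c ∈ A, c ≤ a ∨ b ≤ c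

/-- `A` is `L`-regular: some real `X > 0` bounds all consecutive gaps between `X` and `L*X`. -/
def IsRegularSet (L : ℝ) (A : Finset ℤ) : Prop :=
  ∃ X : ℝ, 0 < X ∧ ∀ a b : ℤ, ConsecIn A a b →
    X ≤ (b : ℝ) - (a : ℝ) ∧ (b : ℝ) - (a : ℝ) ≤ L * X

/-- `R_L(A)`: the maximum cardinality of an `L`-regular subset of `A`. -/
noncomputable def regMax (L : ℝ) (A : Finset ℤ) : ℕ :=
  (A.powerset.filter fun B => IsRegularSet L B).sup Finset.card

/-- `A` is strictly convex: the consecutive differences of its increasing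
enumeration are strictly increasing. -/
def IsConvexSet (A : Finset ℤ) : Prop :=
  ∀ a b c : ℤ, ConsecIn A a b → ConsecIn A b c → b - a < c - b

/-- `C(A)`: the maximum cardinality of a strictly convex subset of `A`. -/
noncomputable def convMax (A : Finset ℤ) : ℕ :=
  (A.powerset.filter fun B => IsConvexSet B).sup Finset.card

open Finset

lemma card_le_regMax {L : ℝ} {B D : Finset ℤ} (hBD : B ⊆ D) (hB : IsRegularSet L B) :
    B.card ≤ regMax L D :=
  le_sup (f := Finset.card) (mem_filter.2 ⟨mem_powerset.2 hBD, hB⟩)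

lemma one_le_regMax {L : ℝ} {D : Finset ℤ} (hD : D.Nonempty) : 1 ≤ regMax L D := by
  obtain ⟨d, hd⟩ := hD
  refine card_le_regMax (B := {d}) (singleton_subset_iff.2 hd) ⟨1, one_pos, ?_⟩
  rintro a b ⟨ha, hb, hab, -⟩
  rw [mem_singleton] at ha hb
  omega

lemma isRegularSet_of_gaps {B : Finset ℤ} {g : ℤ} (hg : 0 < g)
    (hgap : ∀ a b, ConsecIn B a b → g ≤ b - a ∧ b - a ≤ 2 * g) : IsRegularSet 2 B := by
  refine ⟨g, by exact_mod_cast hg, fun a b hab => ?_⟩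
  obtain ⟨h₁, h₂⟩ := hgap a b hab
  constructor <;> [exact_mod_cast h₁; exact_mod_cast h₂]

lemma ConsecIn.of_insert {B : Finset ℤ} {x y a b : ℤ} (hx : x ∈ B) (hxy : x < y)
    (hxmax : ∀ c ∈ B, c ≤ x) (h : ConsecIn (insert y B) a b) :
    (a = x ∧ b = y) ∨ ConsecIn B a b := by
  obtain ⟨ha, hb, hab, hbetween⟩ := h
  have hx' := hbetween x (mem_insert_of_mem hx)
  rcases mem_insert.1 hb with rfl | hb
  · have ha : a ∈ B := (mem_insert.1 ha).resolve_left hab.ne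
    exact .inl ⟨le_antisymm (hxmax a ha) (hx'.resolve_right hxy.not_ge), rfl⟩
  · have ha : a ∈ B := (mem_insert.1 ha).resolve_left (by linarith [hxmax b hb])
    exact .inr ⟨ha, hb, hab, fun c hc => hbetween c (mem_insert_of_mem hc)⟩

/-- Greedy: each new point is taken in the window `[x + g, x + 2g]` above the current maximum. -/
lemma exists_gapped_subset {D : Finset ℤ} {a g : ℤ} {n : ℕ} (hg : 0 < g)
    (hD : ∀ u, a ≤ u → u ≤ a + 2 * g * n → ∃ d ∈ D, u ≤ d ∧ d ≤ u + g) :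
    ∀ i ≤ n, ∃ B ⊆ D, B.card = i + 1 ∧
      (∃ x ∈ B, (∀ b ∈ B, b ≤ x) ∧ a ≤ x ∧ x ≤ a + g + 2 * g * i) ∧
      ∀ b c, ConsecIn B b c → g ≤ c - b ∧ c - b ≤ 2 * g := by
  intro i hi
  induction i with
  | zero =>
    obtain ⟨d, hd, had, hdg⟩ := hD a le_rfl (by simp; positivity)
    refine ⟨{d}, singleton_subset_iff.2 hd, rfl, ⟨d, mem_singleton_self d, by simp, had, by simpa⟩,
      fun b c ⟨hb, hc, hbc, _⟩ => ?_⟩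
    rw [mem_singleton] at hb hc
    omega
  | succ i ih =>
    obtain ⟨B, hBD, hcard, ⟨x, hxB, hxmax, hax, hxa⟩, hgap⟩ := ih (by omega)
    have hi' : (i : ℤ) + 1 ≤ n := by exact_mod_cast hi
    obtain ⟨y, hyD, hxy, hyx⟩ := hD (x + g) (by omega) (by nlinarith)
    have hyB : y ∉ B := fun hy => by linarith [hxmax y hy]
    refine ⟨insert y B, insert_subset hyD hBD, by rw [card_insert_of_notMem hyB, hcard],
      ⟨y, mem_insert_self y B, fun b hb => ?_, by omega, by push_cast; linarith⟩,
      fun b c hbc => ?_⟩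
    · rcases mem_insert.1 hb with rfl | hb
      exacts [le_rfl, (hxmax b hb).trans (by omega)]
    · rcases hbc.of_insert hxB (by omega) hxmax with ⟨rfl, rfl⟩ | hbc
      exacts [by omega, hgap b c hbc]

lemma le_regMax_of_forall_exists_mem_Icc {D : Finset ℤ} {a g : ℤ} {n : ℕ} (hg : 0 < g)
    (hD : ∀ u, a ≤ u → u ≤ a + 2 * g * n → ∃ d ∈ D, u ≤ d ∧ d ≤ u + g) :
    n + 1 ≤ regMax 2 D := by
  obtain ⟨B, hBD, hcard, -, hgap⟩ := exists_gapped_subset hg hD n le_rfl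
  exact hcard ▸ card_le_regMax hBD (isRegularSet_of_gaps hg hgap)

/-- Each `s ∈ S` lies in the windows `[t, t + M)` for the `M` values `t ∈ (s - M, s]`, all of which
are in `S - [0, M)`. -/
lemma card_mul_le_sum_card_inter_Ico (S : Finset ℤ) (M : ℕ) :
    S.card * M ≤ ∑ t ∈ S - Ico 0 (M : ℤ), (S ∩ Ico t (t + M)).card := by
  calc S.card * M = ∑ s ∈ S, (Ioc (s - (M : ℤ)) s).card := by simp [mul_comm]
    _ ≤ ∑ s ∈ S, ((S - Ico 0 (M : ℤ)).filter fun t : ℤ => s ∈ Ico t (t + M)).card := by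
      refine sum_le_sum fun s hs => card_le_card fun t ht => ?_
      rw [mem_Ioc] at ht
      refine mem_filter.2 ⟨mem_sub.2 ⟨s, hs, s - t, ?_, by ring⟩, ?_⟩ <;>
        simp only [mem_Ico] <;> omega
    _ = ∑ t ∈ S - Ico 0 (M : ℤ), (S ∩ Ico t (t + M)).card := by
      simp_rw [← filter_mem_eq_inter, card_eq_sum_ones, sum_filter]
      exact sum_comm

lemma exists_card_mul_le_card_mul_card_inter_Ico (S : Finset ℤ) (M : ℕ) :
    ∃ t : ℤ, S.card * M ≤ (S - Ico 0 (M : ℤ)).card * (S ∩ Ico t (t + M)).card := by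
  set C := S - Ico 0 (M : ℤ)
  rcases C.eq_empty_or_nonempty with hC | hC
  · refine ⟨0, ?_⟩
    have h := card_mul_le_sum_card_inter_Ico S M
    change _ ≤ ∑ t ∈ C, _ at h
    rw [hC, sum_empty] at h
    simp [Nat.le_zero.1 h]
  obtain ⟨t, -, ht⟩ := exists_le_of_sum_le hC (f := fun _ => S.card * M)
    (g := fun t => C.card * (S ∩ Ico t (t + M)).card) <| by
    rw [sum_const, smul_eq_mul, ← mul_sum]
    exact Nat.mul_le_mul_left _ (card_mul_le_sum_card_inter_Ico S M)
  exact ⟨t, ht⟩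

/-- If no difference of `S` is within `M` of `v`, then `S - [0, M)` and its translate by `v` are
disjoint. -/
lemma two_mul_card_sub_Ico_le {S : Finset ℤ} {a v : ℤ} {L M : ℕ} (hv : 0 ≤ v)
    (hS : S ⊆ Ico a (a + L)) (hgap : Disjoint (S - S) (Icc (v - M) (v + M))) :
    2 * ((S - Ico 0 (M : ℤ)).card : ℤ) ≤ L + M + v := by
  set C := S - Ico 0 (M : ℤ)
  have hC : ∀ x ∈ C, a - M ≤ x ∧ x < a + L := by
    intro x hx
    obtain ⟨s, hs, e, he, rfl⟩ := mem_sub.1 hx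
    have := mem_Ico.1 (hS hs)
    have := mem_Ico.1 he
    omega
  have hdisj : Disjoint C (C.map (addRightEmbedding v)) := by
    refine disjoint_left.2 fun x hx hx' => ?_
    obtain ⟨y, hy, rfl⟩ := mem_map.1 hx'
    obtain ⟨s, hs, e, he, hx⟩ := mem_sub.1 hx
    obtain ⟨s', hs', e', he', rfl⟩ := mem_sub.1 hy
    refine disjoint_left.1 hgap (sub_mem_sub hs hs') (mem_Icc.2 ?_)
    have := mem_Ico.1 he
    have := mem_Ico.1 he'
    simp only [addRightEmbedding_apply] at *
    omega
  have hunion : C ∪ C.map (addRightEmbedding v) ⊆ Ico (a - M) (a + L + v) := by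
    intro x hx
    rcases mem_union.1 hx with hx | hx
    · have := hC x hx
      exact mem_Ico.2 (by omega)
    · obtain ⟨y, hy, rfl⟩ := mem_map.1 hx
      have := hC y hy
      simp only [addRightEmbedding_apply, mem_Ico]
      omega
  have := card_le_card hunion
  rw [card_union_of_disjoint hdisj, card_map, Int.card_Ico] at this
  omega

/-- Either `A - A` misses some `[v - M, v + M]` with `M ≤ v ≤ L / 4`, and then `S - [0, M)` is
small, or it meets all of them, and the greedy construction would beat `regMax 2 (A - A)`. -/
lemma exists_dense_window {A S : Finset ℤ} {a : ℤ} {L M : ℕ} (hSA : S ⊆ A)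
    (hS : S ⊆ Ico a (a + L)) (hML : 16 * M * (regMax 2 (A - A) + 1) ≤ L) :
    ∃ t : ℤ, 3 * S.card * M ≤ 2 * L * (S ∩ Ico t (t + M)).card := by
  obtain rfl | hM := M.eq_zero_or_pos
  · exact ⟨0, by simp⟩
  set R := regMax 2 (A - A)
  have hML' : (16 * M * (R + 1) : ℤ) ≤ L := by exact_mod_cast hML
  by_cases hgap : ∃ v : ℤ, M ≤ v ∧ 4 * v ≤ L ∧ Disjoint (A - A) (Icc (v - M) (v + M))
  · obtain ⟨v, hMv, hvL, hv⟩ := hgap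
    have hC := two_mul_card_sub_Ico_le (by omega) hS (hv.mono_left (sub_subset_sub hSA hSA))
    obtain ⟨t, ht⟩ := exists_card_mul_le_card_mul_card_inter_Ico S M
    refine ⟨t, ?_⟩
    have hLMv : 3 * ((L : ℤ) + M + v) ≤ 4 * L := by nlinarith
    zify at ht ⊢
    nlinarith
  · push Not at hgap
    have hR := le_regMax_of_forall_exists_mem_Icc (D := A - A) (a := 0) (g := 2 * M) (n := R)
      (by omega) fun u hu huR => ?_
    · omega
    obtain ⟨d, hd, hdI⟩ := not_disjoint_iff.1 (hgap (u + M) (by omega) (by nlinarith))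
    rw [mem_Icc] at hdI
    exact ⟨d, hd, by omega, by omega⟩

lemma three_pow_mul_card_le_or_card_le_pow (A : Finset ℤ) {ρ : ℕ}
    (hρ : 32 * (regMax 2 (A - A) + 1) ≤ ρ) (j : ℕ) :
    ∀ (S : Finset ℤ) (a : ℤ) (L : ℕ), S ⊆ A → S ⊆ Ico a (a + L) →
      3 ^ j * S.card ≤ 2 ^ j * L ∨ S.card ≤ ρ ^ j := by
  induction j with
  | zero =>
    intro S a L _ hS
    left
    simpa using card_le_card hS
  | succ j ih =>
    intro S a L hSA hS
    have hSL : S.card ≤ L := by simpa using card_le_card hS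
    obtain hLρ | hρL := lt_or_ge L ρ
    · exact .inr (hSL.trans (hLρ.le.trans (Nat.le_self_pow j.succ_ne_zero ρ)))
    set M := L / ρ + 1 with hM
    have hM0 : 0 < M := Nat.succ_pos _
    have hLM : L < ρ * M := Nat.lt_mul_div_succ L (by omega)
    have hML : 16 * M * (regMax 2 (A - A) + 1) ≤ L := by
      have := Nat.mul_le_mul_right (L / ρ) hρ
      have := Nat.mul_div_le L ρ
      rw [hM]
      nlinarith
    obtain ⟨t, ht⟩ := exists_dense_window hSA hS hML
    rcases ih (S ∩ Ico t (t + M)) t M (inter_subset_left.trans hSA) inter_subset_right with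
      hdense | hsmall
    · left
      refine Nat.le_of_mul_le_mul_right (c := M) ?_ hM0
      calc 3 ^ (j + 1) * S.card * M = 3 ^ j * (3 * S.card * M) := by ring
        _ ≤ 3 ^ j * (2 * L * (S ∩ Ico t (t + M)).card) := Nat.mul_le_mul_left _ ht
        _ = 2 * L * (3 ^ j * (S ∩ Ico t (t + M)).card) := by ring
        _ ≤ 2 * L * (2 ^ j * M) := Nat.mul_le_mul_left _ hdense
        _ = 2 ^ (j + 1) * L * M := by ring
    · right
      have : 3 * S.card * M ≤ 2 * ρ ^ (j + 1) * M := by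
        calc 3 * S.card * M ≤ 2 * L * (S ∩ Ico t (t + M)).card := ht
          _ ≤ 2 * (ρ * M) * ρ ^ j := by gcongr
          _ = 2 * ρ ^ (j + 1) * M := by ring
      have := Nat.le_of_mul_le_mul_right this hM0
      omega

lemma succ_succ_mul_two_pow_le (m : ℕ) : (m + 2) * 2 ^ m ≤ 2 * 3 ^ m := by
  induction m with
  | zero => norm_num
  | succ m ih =>
    calc (m + 1 + 2) * 2 ^ (m + 1) = (2 * m + 6) * 2 ^ m := by ring
      _ ≤ 3 * ((m + 2) * 2 ^ m) := by rw [← mul_assoc]; gcongr; omega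
      _ ≤ 2 * 3 ^ (m + 1) := by rw [pow_succ]; omega

lemma succ_succ_mul_sixtyfour_pow_le : ∀ m : ℕ,
    (m + 2) * 64 ^ m ≤ 2 * 3 ^ (m + 2) * 3 ^ ((m + 1) * m)
  | 0 => by norm_num
  | 1 => by norm_num
  | m + 2 => by
    have ih := succ_succ_mul_sixtyfour_pow_le (m + 1)
    have h9 : 81 ≤ 9 ^ (m + 2) := by
      calc 81 = 9 ^ 2 := by norm_num
        _ ≤ 9 ^ (m + 2) := Nat.pow_le_pow_right (by norm_num) (by omega)
    calc (m + 2 + 2) * 64 ^ (m + 2) = 64 * (m + 4) * 64 ^ (m + 1) := by ring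
      _ ≤ 128 * (m + 1 + 2) * 64 ^ (m + 1) := Nat.mul_le_mul_right _ (by omega)
      _ ≤ 128 * (2 * 3 ^ (m + 1 + 2) * 3 ^ ((m + 1 + 1) * (m + 1))) := by
        rw [mul_assoc]; exact Nat.mul_le_mul_left _ ih
      _ ≤ 2 * (3 * 3 ^ (m + 1 + 2)) * (3 ^ ((m + 1 + 1) * (m + 1)) * 9 ^ (m + 2)) := by
        nlinarith [Nat.zero_le (3 ^ (m + 1 + 2) * 3 ^ ((m + 1 + 1) * (m + 1)))]
      _ = 2 * 3 ^ (m + 2 + 2) * 3 ^ ((m + 2 + 1) * (m + 2)) := by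
        rw [show 9 = 3 ^ 2 by rfl, ← pow_mul, ← pow_add, ← pow_succ']
        ring_nf

lemma exists_floor_two_div_eq_succ {δ : ℝ} (hδ0 : 0 < δ) (hδ1 : δ ≤ 1) :
    ∃ m : ℕ, ⌊2 / δ⌋₊ = m + 1 ∧ δ * (m + 1) ≤ 2 ∧ 2 < δ * (m + 2) := by
  have hk : 1 ≤ ⌊2 / δ⌋₊ := Nat.le_floor (by rw [Nat.cast_one, le_div_iff₀ hδ0]; linarith)
  obtain ⟨m, hm⟩ : ∃ m, ⌊2 / δ⌋₊ = m + 1 := ⟨_, (Nat.sub_add_cancel hk).symm⟩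
  have hle := Nat.floor_le (a := 2 / δ) (by positivity)
  have hlt := Nat.lt_floor_add_one (2 / δ)
  rw [hm, le_div_iff₀ hδ0] at hle
  rw [hm, div_lt_iff₀ hδ0] at hlt
  push_cast at hle hlt
  exact ⟨m, hm, by linarith, by linarith⟩

lemma lt_three_pow_mul {δ : ℝ} {N m : ℕ} (hN : 0 < N) (hδ : 2 < δ * (m + 2)) :
    (2 : ℝ) ^ m * N < 3 ^ m * (δ * N) := by
  have h : ((m : ℝ) + 2) * 2 ^ m ≤ 2 * 3 ^ m := by exact_mod_cast succ_succ_mul_two_pow_le m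
  have hN : (0 : ℝ) < N := by exact_mod_cast hN
  have h3 : (0 : ℝ) < 3 ^ m := by positivity
  refine lt_of_mul_lt_mul_left (a := (m : ℝ) + 2) ?_ (by positivity)
  calc ((m : ℝ) + 2) * (2 ^ m * N) ≤ 2 * 3 ^ m * N := by nlinarith
    _ < δ * (m + 2) * 3 ^ m * N := by gcongr
    _ = (m + 2) * (3 ^ m * (δ * N)) := by ring

lemma succ_succ_mul_pow_le_two_mul {δ : ℝ} {N m : ℕ} (hδ0 : 0 < δ) (hδ : δ * (m + 1) ≤ 2)
    (hN : 3 ^ ((m + 1) ^ 2 + (m + 1)) ≤ N) :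
    ((m : ℝ) + 2) * (64 * ((N : ℝ) ^ (δ / 2) / 3 ^ (2 / δ))) ^ m ≤ 2 * N := by
  have hN1 : (1 : ℝ) ≤ N := by exact_mod_cast (Nat.one_le_pow _ _ (by norm_num)).trans hN
  set x := (N : ℝ) ^ (((m + 1 : ℕ) : ℝ)⁻¹)
  have hx0 : 0 ≤ x := by positivity
  have hxN : x ^ (m + 1) = N := Real.rpow_inv_natCast_pow (by positivity) m.succ_ne_zero
  have hx : (3 : ℝ) ^ (m + 2) ≤ x := by
    refine le_of_pow_le_pow_left₀ m.succ_ne_zero hx0 ?_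
    rw [hxN, ← pow_mul, show (m + 2) * (m + 1) = (m + 1) ^ 2 + (m + 1) by ring]
    exact_mod_cast hN
  have hT : (N : ℝ) ^ (δ / 2) / 3 ^ (2 / δ) ≤ x / 3 ^ (m + 1) := by
    refine div_le_div₀ hx0 (Real.rpow_le_rpow_of_exponent_le hN1 ?_) (by positivity) ?_
    · rw [Nat.cast_succ, le_inv_comm₀ (by positivity) (by positivity), inv_div,
        le_div_iff₀ hδ0]
      linarith
    · rw [← Real.rpow_natCast]
      refine Real.rpow_le_rpow_of_exponent_le (by norm_num) ?_
      rw [le_div_iff₀ hδ0]; push_cast; linarith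
  have h64 : ((m : ℝ) + 2) * 64 ^ m ≤ 2 * 3 ^ (m + 2) * 3 ^ ((m + 1) * m) := by
    exact_mod_cast succ_succ_mul_sixtyfour_pow_le m
  calc ((m : ℝ) + 2) * (64 * ((N : ℝ) ^ (δ / 2) / 3 ^ (2 / δ))) ^ m
      ≤ ((m : ℝ) + 2) * (64 * (x / 3 ^ (m + 1))) ^ m := by gcongr
    _ = ((m : ℝ) + 2) * 64 ^ m * x ^ m / 3 ^ ((m + 1) * m) := by
      rw [mul_pow, div_pow, ← pow_mul]; ring
    _ ≤ 2 * 3 ^ (m + 2) * 3 ^ ((m + 1) * m) * x ^ m / 3 ^ ((m + 1) * m) := by gcongr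
    _ = 2 * (3 ^ (m + 2) * x ^ m) := by field_simp
    _ ≤ 2 * (x * x ^ m) := by gcongr
    _ = 2 * N := by rw [← hxN, pow_succ']

/-- If `N ≥ 3^(⌊2/δ⌋² + ⌊2/δ⌋)` and `A ⊆ {1, …, N}` has `|A| ≥ δN`, then
`R_2(A − A) ≥ N^(δ/2) / 3^(2/δ)`. -/
theorem stmt4 (N : ℕ) (hN : 0 < N) (δ : ℝ) (hδ0 : 0 < δ) (hδ1 : δ ≤ 1)
    (hNbig : 3 ^ (⌊2 / δ⌋₊ ^ 2 + ⌊2 / δ⌋₊) ≤ N)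
    (A : Finset ℤ) (hA : A ⊆ Finset.Icc (1 : ℤ) (N : ℤ))
    (hcard : δ * (N : ℝ) ≤ (A.card : ℝ)) :
    (N : ℝ) ^ (δ / 2) / 3 ^ (2 / δ) ≤ (regMax 2 (A - A) : ℝ) := by
  obtain ⟨m, hm, hδ_le, hδ_lt⟩ := exists_floor_two_div_eq_succ hδ0 hδ1
  rw [hm] at hNbig
  have hAne : A.Nonempty := by
    rw [← card_pos, ← Nat.cast_pos (α := ℝ)]
    exact lt_of_lt_of_le (by positivity) hcard
  set R := regMax 2 (A - A)
  have hR : 1 ≤ R := one_le_regMax (hAne.sub hAne)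
  have hA' : A ⊆ Ico 1 (1 + N) := fun x hx => by
    have := mem_Icc.1 (hA hx)
    exact mem_Ico.2 (by omega)
  rcases three_pow_mul_card_le_or_card_le_pow A le_rfl m A 1 N Subset.rfl hA' with hdense | hsmall
  · have hdense : (3 : ℝ) ^ m * A.card ≤ 2 ^ m * N := by exact_mod_cast hdense
    have hlt := lt_three_pow_mul hN hδ_lt
    nlinarith [pow_pos (three_pos (α := ℝ)) m]
  · have hcard_le : (A.card : ℝ) ≤ (64 * R) ^ m := by
      calc (A.card : ℝ) ≤ (32 * (R + 1)) ^ m := by exact_mod_cast hsmall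
        _ ≤ (64 * R) ^ m := by gcongr ?_ ^ m; linarith [(Nat.one_le_cast (α := ℝ)).2 hR]
    have hpow : (64 * ((N : ℝ) ^ (δ / 2) / 3 ^ (2 / δ))) ^ m < (64 * R) ^ m := by
      refine lt_of_mul_lt_mul_left (a := (m : ℝ) + 2) ?_ (by positivity)
      calc _ ≤ 2 * (N : ℝ) := succ_succ_mul_pow_le_two_mul hδ0 hδ_le hNbig
        _ < δ * (m + 2) * N := by gcongr
        _ ≤ (m + 2) * (64 * R) ^ m := by nlinarith
    linarith [lt_of_pow_lt_pow_left₀ m (by positivity) hpow]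
end

section
/- Let r and N be positive integers with N ≥ 3^(r² + r). Then for any partition [N] = A_1 ∪ ⋯ ∪ A_r of [N] into r parts, max{C(A_i) : 1 ≤ i ≤ r} ≥ ⌊N^(1/(2r)) / (4 · 3^(r/2))⌋. -/
open scoped Classical Pointwise

/-!
Split `(0, n^(2r)]` into `n²` blocks of length `n^(2(r-1))` and fix a colour `i` present in
the first block. If `i` meets every block, one point of `A i` from each of the blocks numbered
`0, 1, 4, …, (n-1)²` gives a strictly convex set of size `n`, because the gaps between squares
grow. Otherwise some block avoids `i` and is covered by the other `r - 1` colours, and we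
recurse into it. Taking `n = ⌊N^(1/(2r)) / (4 · 3^(r/2))⌋ + 1` gives `n^(2r) ≤ N`.
-/

open Finset

lemma IsConvexSet.card_le_convMax {A B : Finset ℤ} (hB : IsConvexSet B) (hBA : B ⊆ A) :
    B.card ≤ convMax A :=
  le_sup (f := Finset.card) (mem_filter.mpr ⟨mem_powerset.mpr hBA, hB⟩)

section ImageRange

variable {g : ℕ → ℤ} {n : ℕ}

lemma ConsecIn.exists_succ_of_strictMonoOn (hg : StrictMonoOn g (Set.Iio n)) {p q : ℤ}
    (h : ConsecIn ((range n).image g) p q) :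
    ∃ u, u + 1 < n ∧ g u = p ∧ g (u + 1) = q := by
  obtain ⟨hp, hq, hpq, hbetween⟩ := h
  obtain ⟨u, hu, rfl⟩ := mem_image.mp hp
  obtain ⟨v, hv, rfl⟩ := mem_image.mp hq
  rw [mem_range] at hu hv
  have huv : u < v := (hg.lt_iff_lt hu hv).mp hpq
  have hv_eq : v = u + 1 := by
    by_contra hne
    rcases hbetween (g (u + 1)) (mem_image_of_mem g (mem_range.mpr (by omega))) with h | h
    · exact h.not_gt (hg hu (show u + 1 < n by omega) (Nat.lt_succ_self u))
    · exact h.not_gt (hg (show u + 1 < n by omega) hv (by omega))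
  exact ⟨u, by omega, rfl, by rw [hv_eq]⟩

lemma isConvexSet_image_range (hg : StrictMonoOn g (Set.Iio n))
    (hgap : ∀ u, u + 2 < n → g (u + 1) - g u < g (u + 2) - g (u + 1)) :
    IsConvexSet ((range n).image g) := by
  intro p q s hpq hqs
  obtain ⟨u, hu, rfl, rfl⟩ := hpq.exists_succ_of_strictMonoOn hg
  obtain ⟨v, hv, hv_eq, rfl⟩ := hqs.exists_succ_of_strictMonoOn hg
  obtain rfl : v = u + 1 := hg.injOn (show v < n by omega) hu hv_eq
  exact hgap u hv

end ImageRange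

lemma le_convMax_of_meets_square_blocks {A : Finset ℤ} {a M : ℤ} (hM : 0 < M) {n : ℕ}
    (hmeet : ∀ u < n, ∃ x ∈ A, a + (u : ℤ) ^ 2 * M < x ∧ x ≤ a + ((u : ℤ) ^ 2 + 1) * M) :
    n ≤ convMax A := by
  choose! g hgA hg using hmeet
  have hmono : StrictMonoOn g (Set.Iio n) := by
    intro u hu v hv huv
    have hsq : (u : ℤ) ^ 2 + 1 ≤ (v : ℤ) ^ 2 := by
      have : (u : ℤ) + 1 ≤ v := by exact_mod_cast huv
      nlinarith
    nlinarith [(hg u hu).2, (hg v hv).1]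
  have hgap : ∀ u, u + 2 < n → g (u + 1) - g u < g (u + 2) - g (u + 1) := by
    intro u hu
    have h₀ := hg u (by omega)
    have h₁ := hg (u + 1) (by omega)
    have h₂ := hg (u + 2) (by omega)
    push_cast at h₁ h₂
    nlinarith [h₀.1, h₁.2, h₁.1, h₂.1]
  calc n = ((range n).image g).card := by
        rw [card_image_of_injOn (hmono.injOn.mono (fun u hu => mem_range.mp hu)), card_range]
    _ ≤ convMax A := (isConvexSet_image_range hmono hgap).card_le_convMax fun x hx => by
        obtain ⟨u, hu, rfl⟩ := mem_image.mp hx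
        exact hgA u (mem_range.mp hu)

lemma exists_le_convMax_of_Ioc_subset_biUnion {ι : Type*} (A : ι → Finset ℤ) {n : ℕ}
    (hn : 0 < n) (j : ℕ) (a : ℤ) (s : Finset ι) (hs : s.card ≤ j)
    (hcover : Ioc a (a + ((n ^ 2) ^ j : ℕ)) ⊆ s.biUnion A) :
    ∃ i, n ≤ convMax (A i) := by
  induction j generalizing a s with
  | zero =>
    obtain ⟨i, hi, -⟩ := mem_biUnion.mp (hcover (show a + 1 ∈ Ioc a (a + 1) by simp))
    have := card_pos.mpr ⟨i, hi⟩
    omega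
  | succ j ih =>
    set M : ℤ := (((n ^ 2) ^ j : ℕ) : ℤ)
    have hM : 0 < M := by positivity
    have hlen : (((n ^ 2) ^ (j + 1) : ℕ) : ℤ) = (n : ℤ) ^ 2 * M := by push_cast [M]; ring
    rw [hlen] at hcover
    obtain ⟨i₀, hi₀, -⟩ := mem_biUnion.mp (hcover (show a + 1 ∈ Ioc a (a + (n : ℤ) ^ 2 * M) by
      simp only [mem_Ioc]; constructor <;> nlinarith))
    by_cases hmeet : ∀ t < n ^ 2, ∃ x ∈ A i₀, a + t * M < x ∧ x ≤ a + (t + 1) * M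
    · refine ⟨i₀, le_convMax_of_meets_square_blocks (a := a) hM fun u hu => ?_⟩
      simpa using hmeet (u ^ 2) (Nat.pow_lt_pow_left hu two_ne_zero)
    · push Not at hmeet
      obtain ⟨t, ht, hmiss⟩ := hmeet
      refine ih (a + t * M) (s.erase i₀) (by rw [card_erase_of_mem hi₀]; omega) fun x hx => ?_
      have ht' : (t : ℤ) + 1 ≤ (n : ℤ) ^ 2 := by exact_mod_cast ht
      rw [mem_Ioc] at hx
      obtain ⟨i, hi, hxi⟩ := mem_biUnion.mp (hcover (by
        simp only [mem_Ioc]; constructor <;> nlinarith))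
      refine mem_biUnion.mpr ⟨i, mem_erase.mpr ⟨?_, hi⟩, hxi⟩
      rintro rfl
      have := hmiss x hxi hx.1
      linarith

lemma floor_rpow_div_add_one_pow_le {k N : ℕ} (hk : 0 < k) (hN : 2 ^ k ≤ N) {c : ℝ}
    (hc : 2 ≤ c) : (⌊(N : ℝ) ^ ((1 : ℝ) / k) / c⌋₊ + 1) ^ k ≤ N := by
  set y := (N : ℝ) ^ ((1 : ℝ) / k)
  have hy : y ^ k = N := by
    simp only [y, one_div]
    exact Real.rpow_inv_natCast_pow (Nat.cast_nonneg N) hk.ne'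
  have hy0 : 0 ≤ y := by positivity
  have hy2 : 2 ≤ y := le_of_pow_le_pow_left₀ hk.ne' hy0 (by rw [hy]; exact_mod_cast hN)
  have hfloor : (⌊y / c⌋₊ : ℝ) + 1 ≤ y := by
    have : (⌊y / c⌋₊ : ℝ) ≤ y / 2 :=
      (Nat.floor_le (by positivity)).trans (div_le_div_of_nonneg_left hy0 two_pos hc)
    linarith
  have : ((⌊y / c⌋₊ + 1 : ℕ) : ℝ) ^ k ≤ N :=
    hy ▸ pow_le_pow_left₀ (by positivity) (by push_cast; exact hfloor) k
  exact_mod_cast this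

theorem stmt8_general (r N : ℕ) (hr : 0 < r) (hN : 3 ^ (r ^ 2 + r) ≤ N)
    (A : Fin r → Finset ℤ)
    (hcover : Finset.univ.biUnion A = Finset.Icc (1 : ℤ) (N : ℤ)) :
    ∃ i, ⌊(N : ℝ) ^ ((1 : ℝ) / (2 * r)) / (4 * 3 ^ ((r : ℝ) / 2))⌋₊ ≤ convMax (A i) := by
  set m := ⌊(N : ℝ) ^ ((1 : ℝ) / (2 * r)) / (4 * 3 ^ ((r : ℝ) / 2))⌋₊
  have hm : ((m + 1) ^ 2) ^ r ≤ N := by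
    have h2N : 2 ^ (2 * r) ≤ N := calc
      2 ^ (2 * r) ≤ 3 ^ (2 * r) := Nat.pow_le_pow_left (by norm_num) _
      _ ≤ 3 ^ (r ^ 2 + r) := Nat.pow_le_pow_right (by norm_num) (by nlinarith)
      _ ≤ N := hN
    have hc : (2 : ℝ) ≤ 4 * 3 ^ ((r : ℝ) / 2) := by
      nlinarith [Real.one_le_rpow (by norm_num : (1 : ℝ) ≤ 3) (by positivity : (0 : ℝ) ≤ r / 2)]
    rw [← pow_mul]
    have := floor_rpow_div_add_one_pow_le (k := 2 * r) (by omega) h2N hc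
    push_cast at this
    exact this
  have hIoc : Ioc (0 : ℤ) (0 + (((m + 1) ^ 2) ^ r : ℕ)) ⊆ univ.biUnion A := by
    rw [hcover]
    intro x hx
    have : ((((m + 1) ^ 2) ^ r : ℕ) : ℤ) ≤ N := by exact_mod_cast hm
    simp only [mem_Ioc, mem_Icc] at hx ⊢
    omega
  obtain ⟨i, hi⟩ := exists_le_convMax_of_Ioc_subset_biUnion A m.succ_pos r 0 univ
    ((card_le_univ _).trans_eq (Fintype.card_fin r)) hIoc
  exact ⟨i, by omega⟩

/-- If `N ≥ 3^(r² + r)` and `{1, …, N}` is partitioned into `r` parts, then some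
part satisfies `C(A_i) ≥ ⌊N^(1/(2r)) / (4 · 3^(r/2))⌋`. -/
theorem stmt8 (r N : ℕ) (hr : 0 < r) (hN : 3 ^ (r ^ 2 + r) ≤ N)
    (A : Fin r → Finset ℤ)
    (hdisj : ∀ i j, i ≠ j → Disjoint (A i) (A j))
    (hcover : Finset.univ.biUnion A = Finset.Icc (1 : ℤ) (N : ℤ)) :
    ∃ i, ⌊(N : ℝ) ^ ((1 : ℝ) / (2 * r)) / (4 * 3 ^ ((r : ℝ) / 2))⌋₊ ≤ convMax (A i) :=
  stmt8_general r N hr hN A hcover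
end
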